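/- Let P be an irreducible aperiodic row-stochastic matrix, π its stationary distribution, and H its entropy rate. Define c(t) = log λ_t where λ_t is the Perron root of the Hadamard power P^{(t)}. Then c(1) = 0 (since P^{(1)} = P is stochastic with Perron root 1), and if c is differentiable at t = 1, then c'(1) = -H, where the derivative formula c'(t) = a_t^T[(log P)∘P^{(t)}]b_t / (a_t^T P^{(t)} b_t) holds with a_t, b_t the left and right Perron eigenvectors; at t = 1 one may take a_1 = π and b_1 = 1, giving c'(1) = Σ_i π_i Σ_{j: P_{ij}>0} P_{ij} log P_{ij} = -H. -/

import Mathlib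

open Matrix

/-- The sparsity-preserving Hadamard power of a matrix. -/
noncomputable def hadamardPow {M : ℕ} (A : Matrix (Fin M) (Fin M) ℝ) (t : ℝ) :
    Matrix (Fin M) (Fin M) ℝ :=
  fun i j => if A i j = 0 then 0 else A i j ^ t

/-- A nonnegative matrix is irreducible if for every pair `(i, j)` some power
has a strictly positive `(i, j)` entry. -/
def MatrixIrreducible {M : ℕ} (A : Matrix (Fin M) (Fin M) ℝ) : Prop :=
  ∀ i j, ∃ n : ℕ, 1 ≤ n ∧ 0 < (A ^ n) i j

/-- A matrix is aperiodic (primitive) if some power is entrywise positive. -/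
def MatrixAperiodic {M : ℕ} (A : Matrix (Fin M) (Fin M) ℝ) : Prop :=
  ∃ n : ℕ, 1 ≤ n ∧ ∀ i j, 0 < (A ^ n) i j

/-- Let `P` be irreducible, aperiodic and row-stochastic with stationary
distribution `π` and entropy rate `H = -Σ_i π_i Σ_j P i j log (P i j)`.  If
`c t = log λ_t` where `λ_t` is the Perron root of the Hadamard power `P^{(t)}`
(characterized here by positive left/right eigenvectors `a t`, `b t` with
eigenvalue `exp (c t)`), then `c 1 = 0`, and if `c` is differentiable at `1`
then `c' 1 = -H`. -/
theorem stmt_13 (M : ℕ) (hM : 1 ≤ M) (P : Matrix (Fin M) (Fin M) ℝ)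
    (hnonneg : ∀ i j, 0 ≤ P i j) (hstoch : ∀ i, ∑ j, P i j = 1)
    (hirr : MatrixIrreducible P) (haper : MatrixAperiodic P)
    (π : Fin M → ℝ) (hπpos : ∀ i, 0 < π i) (hπsum : ∑ i, π i = 1)
    (hstat : π ᵥ* P = π)
    (H : ℝ) (hH : H = -∑ i, π i * ∑ j, P i j * Real.log (P i j))
    (c : ℝ → ℝ) (a b : ℝ → Fin M → ℝ)
    (hapos : ∀ t i, 0 < a t i) (hbpos : ∀ t i, 0 < b t i)
    (hleft : ∀ t, (a t) ᵥ* (hadamardPow P t) = Real.exp (c t) • a t)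
    (hright : ∀ t, (hadamardPow P t) *ᵥ (b t) = Real.exp (c t) • b t) :
    c 1 = 0 ∧ (DifferentiableAt ℝ c 1 → deriv c 1 = -H) := by
  have hP1 : hadamardPow P 1 = P := by
    ext i j
    simp only [hadamardPow]
    split
    · exact (by assumption : P i j = 0).symm
    · exact Real.rpow_one _
  -- c 1 = 0
  have hdotpos : 0 < π ⬝ᵥ b 1 :=
    Finset.sum_pos (fun i _ => mul_pos (hπpos i) (hbpos 1 i)) ⟨⟨0, hM⟩, Finset.mem_univ _⟩
  have hc1 : c 1 = 0 := by
    have h := hright 1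
    rw [hP1] at h
    have h2 : π ⬝ᵥ (P *ᵥ b 1) = π ⬝ᵥ (Real.exp (c 1) • b 1) := by rw [h]
    rw [dotProduct_mulVec, hstat, dotProduct_smul] at h2
    have hexp : Real.exp (c 1) = 1 := by
      have := h2.symm
      rw [smul_eq_mul] at this
      have : (Real.exp (c 1) - 1) * (π ⬝ᵥ b 1) = 0 := by linarith
      rcases mul_eq_zero.mp this with h' | h'
      · linarith
      · exact absurd h' (ne_of_gt hdotpos)
    rw [← Real.log_exp (c 1), hexp, Real.log_one]
  refine ⟨hc1, ?_⟩
  -- the key lower bound: c t ≥ (t - 1) * (∑ π ℓ) = -(t-1) H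
  set ℓ : Fin M → ℝ := fun i => ∑ j, P i j * Real.log (P i j) with hℓ
  have key : ∀ t, (t - 1) * (∑ i, π i * ℓ i) ≤ c t := by
    intro t
    have per : ∀ i, (t - 1) * ℓ i + ∑ j, P i j * Real.log (b t j)
        ≤ c t + Real.log (b t i) := by
      intro i
      set y : Fin M → ℝ := fun j =>
        if P i j = 0 then 0 else (t - 1) * Real.log (P i j) + Real.log (b t j) with hy
      have jensen := convexOn_exp.map_sum_le (t := Finset.univ) (w := P i) (p := y)
        (fun j _ => hnonneg i j) (hstoch i) (fun j _ => Set.mem_univ _)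
      -- RHS of jensen equals exp (c t) * b t i
      have hrhs : ∑ j, P i j • Real.exp (y j) = Real.exp (c t) * b t i := by
        have : ∀ j, P i j • Real.exp (y j) = (hadamardPow P t) i j * b t j := by
          intro j
          by_cases h : P i j = 0
          · simp [hy, h, hadamardPow]
          · have hpos : 0 < P i j := lt_of_le_of_ne (hnonneg i j) (Ne.symm h)
            have h1 : P i j ^ ((1:ℝ) + (t - 1)) = P i j ^ (1:ℝ) * P i j ^ (t - 1) :=
              Real.rpow_add hpos 1 (t - 1)
            rw [Real.rpow_one, show (1:ℝ) + (t - 1) = t by ring] at h1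
            have h2 : Real.exp ((t - 1) * Real.log (P i j)) = P i j ^ (t - 1) := by
              rw [Real.rpow_def_of_pos hpos, mul_comm]
            simp only [hy, if_neg h, hadamardPow, smul_eq_mul]
            rw [Real.exp_add, h2, Real.exp_log (hbpos t j), h1]
            ring
        rw [Finset.sum_congr rfl (fun j _ => this j)]
        have := congrFun (hright t) i
        simp only [mulVec, dotProduct, Pi.smul_apply, smul_eq_mul] at this
        exact this
      -- LHS exponent of jensen
      have hlhs : ∑ j, P i j • y j
          = (t - 1) * ℓ i + ∑ j, P i j * Real.log (b t j) := by
        have : ∀ j, P i j • y j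
            = (t - 1) * (P i j * Real.log (P i j)) + P i j * Real.log (b t j) := by
          intro j
          by_cases h : P i j = 0
          · simp [hy, h]
          · simp only [hy, if_neg h, smul_eq_mul]; ring
        rw [Finset.sum_congr rfl (fun j _ => this j), Finset.sum_add_distrib,
          ← Finset.mul_sum]
      rw [hlhs, hrhs] at jensen
      have : Real.exp (c t) * b t i = Real.exp (c t + Real.log (b t i)) := by
        rw [Real.exp_add, Real.exp_log (hbpos t i)]
      rw [this] at jensen
      exact Real.exp_le_exp.mp jensen
    -- sum over i with weights π i
    have hsum := Finset.sum_le_sum (s := Finset.univ)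
      (fun i _ => mul_le_mul_of_nonneg_left (per i) (le_of_lt (hπpos i)))
    have hL : ∑ i, π i * ((t - 1) * ℓ i + ∑ j, P i j * Real.log (b t j))
        = (t - 1) * (∑ i, π i * ℓ i) + ∑ j, π j * Real.log (b t j) := by
      have swap : ∑ i, π i * ∑ j, P i j * Real.log (b t j)
          = ∑ j, π j * Real.log (b t j) := by
        calc ∑ i, π i * ∑ j, P i j * Real.log (b t j)
            = ∑ i, ∑ j, π i * P i j * Real.log (b t j) := by
              refine Finset.sum_congr rfl fun i _ => ?_
              rw [Finset.mul_sum]; exact Finset.sum_congr rfl fun j _ => by ring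
          _ = ∑ j, ∑ i, π i * P i j * Real.log (b t j) := Finset.sum_comm
          _ = ∑ j, π j * Real.log (b t j) := by
              refine Finset.sum_congr rfl fun j _ => ?_
              rw [← Finset.sum_mul]
              have := congrFun hstat j
              simp only [vecMul, dotProduct] at this
              rw [this]
      calc ∑ i, π i * ((t - 1) * ℓ i + ∑ j, P i j * Real.log (b t j))
          = ∑ i, ((t - 1) * (π i * ℓ i) + π i * ∑ j, P i j * Real.log (b t j)) := by
            exact Finset.sum_congr rfl fun i _ => by ring
        _ = (t - 1) * (∑ i, π i * ℓ i) + ∑ i, π i * ∑ j, P i j * Real.log (b t j) := by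
            rw [Finset.sum_add_distrib, ← Finset.mul_sum]
        _ = (t - 1) * (∑ i, π i * ℓ i) + ∑ j, π j * Real.log (b t j) := by rw [swap]
    have hR : ∑ i, π i * (c t + Real.log (b t i))
        = c t + ∑ i, π i * Real.log (b t i) := by
      calc ∑ i, π i * (c t + Real.log (b t i))
          = ∑ i, (π i * c t + π i * Real.log (b t i)) :=
            Finset.sum_congr rfl fun i _ => by ring
        _ = (∑ i, π i) * c t + ∑ i, π i * Real.log (b t i) := by
            rw [Finset.sum_add_distrib, ← Finset.sum_mul]
        _ = c t + ∑ i, π i * Real.log (b t i) := by rw [hπsum, one_mul]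
    rw [hL, hR] at hsum
    linarith
  -- conclude the derivative
  intro hdiff
  have hHsum : ∑ i, π i * ℓ i = -H := by rw [hH]; ring
  set g : ℝ → ℝ := fun t => c t + (t - 1) * H with hg
  have hg1 : g 1 = 0 := by simp [hg, hc1]
  have hgnn : ∀ t, 0 ≤ g t := by
    intro t
    have := key t
    rw [hHsum] at this
    simp only [hg]
    linarith
  have hmin : IsLocalMin g 1 := by
    apply Filter.Eventually.of_forall
    intro t
    rw [hg1]
    exact hgnn t
  have hlin : HasDerivAt (fun t : ℝ => (t - 1) * H) H 1 := by
    simpa using ((hasDerivAt_id (1:ℝ)).sub_const 1).mul_const H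
  have hderiv : deriv g 1 = deriv c 1 + H := by
    rw [hg]
    rw [deriv_fun_add hdiff hlin.differentiableAt, hlin.deriv]
  have := hmin.deriv_eq_zero
  rw [hderiv] at this
  linarith
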